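/- Let 𝔛 ⊂ ℂ be a discrete, closed (locally finite) set, f_1,…,f_N, g_1,…,g_N ∈ ℓ²(𝔛) with Σ_{j=1}^N f_j(x) g_j(x) = 0 for all x ∈ 𝔛, and d : 𝔛 → ℂ a bounded function with inf_{x∈𝔛} |1 + d(x)| > 0. Suppose V is a bounded linear operator on ℓ²(𝔛) with matrix entries V(x,y) = (Σ_{j=1}^N f_j(x) g_j(y))/(x−y) for x ≠ y and V(x,x) = d(x), that Vᵗ is a bounded linear operator with matrix entries Vᵗ(x,y) = V(y,x), and that I + V is invertible. Then the operator W = V(I+V)^{−1} is integrable: there exist functions F̃_1,…,F̃_N, G̃_1,…,G̃_N : 𝔛 → ℂ such that the matrix entries of W satisfy W(x,y) = (Σ_{j=1}^N F̃_j(x) G̃_j(y))/(x−y) for all x ≠ y in 𝔛. -/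

import Mathlib

/-
Write `R = (1 + V)⁻¹`, so that `W = V R = 1 - R` and `W(x, y) = -R(x, y)` off the diagonal. With
`P` the operator of multiplication by the position `x`, the hypotheses say that `[P, 1 + V]` has the
finite-rank kernel `∑ⱼ fⱼ(x) gⱼ(y)`, and `[P, R] = -R [P, 1 + V] R` turns this into
`(x - y) R(x, y) = -∑ⱼ (R fⱼ)(x) (gⱼᵀ R)(y)`. As `P` is unbounded, the identity is first proved for
the bounded truncations of `P` that clamp real and imaginary parts to `[-n, n]`; their difference
quotients are bounded by `1`, so dominated convergence lets `n → ∞`.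
-/

noncomputable section

open scoped ENNReal

def entry {X : Type*} (A : lp (fun _ : X => ℂ) 2 →L[ℂ] lp (fun _ : X => ℂ) 2) (x y : X) : ℂ :=
  letI := Classical.decEq X
  inner (𝕜 := ℂ) (lp.single 2 x (1:ℂ)) (A (lp.single 2 y 1))

open scoped lp ComplexConjugate
open Filter Topology

section Entries

variable {X : Type*}

theorem entry_eq_apply [DecidableEq X] (A : ℓ²(X, ℂ) →L[ℂ] ℓ²(X, ℂ)) (x y : X) :
    entry A x y = A (lp.single 2 y 1) x := by
  rw [entry, Subsingleton.elim (Classical.decEq X) ‹_›, lp.inner_single_left]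
  simp

theorem entry_eq_conj_adjoint_apply [DecidableEq X] (A : ℓ²(X, ℂ) →L[ℂ] ℓ²(X, ℂ)) (x y : X) :
    entry A x y = conj (A.adjoint (lp.single 2 x 1) y) := by
  rw [entry, Subsingleton.elim (Classical.decEq X) ‹_›, ← ContinuousLinearMap.adjoint_inner_left,
    lp.inner_single_right]
  simp

theorem hasSum_entry_mul (A : ℓ²(X, ℂ) →L[ℂ] ℓ²(X, ℂ)) (x : X) (q : ℓ²(X, ℂ)) :
    HasSum (fun z => entry A x z * q z) (A q x) := by
  classical
  have h := lp.hasSum_inner (𝕜 := ℂ) (A.adjoint (lp.single 2 x 1)) q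
  rw [ContinuousLinearMap.adjoint_inner_left, lp.inner_single_left] at h
  simpa [entry_eq_conj_adjoint_apply, mul_comm] using h

theorem entry_mul (A B : ℓ²(X, ℂ) →L[ℂ] ℓ²(X, ℂ)) (x y : X) :
    entry (A * B) x y = ∑' z, entry A x z * entry B z y := by
  classical
  simp only [entry_eq_apply B]
  rw [entry_eq_apply]
  exact (hasSum_entry_mul A x (B (lp.single 2 y 1))).tsum_eq.symm

theorem entry_add (A B : ℓ²(X, ℂ) →L[ℂ] ℓ²(X, ℂ)) (x y : X) :
    entry (A + B) x y = entry A x y + entry B x y := by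
  classical
  simp [entry_eq_apply]

theorem entry_sub (A B : ℓ²(X, ℂ) →L[ℂ] ℓ²(X, ℂ)) (x y : X) :
    entry (A - B) x y = entry A x y - entry B x y := by
  classical
  simp [entry_eq_apply]

theorem entry_one_of_ne {x y : X} (h : x ≠ y) : entry (1 : ℓ²(X, ℂ) →L[ℂ] ℓ²(X, ℂ)) x y = 0 := by
  classical
  simp [entry_eq_apply, Pi.single_eq_of_ne h]

theorem summable_norm_entry_mul (A : ℓ²(X, ℂ) →L[ℂ] ℓ²(X, ℂ)) (x : X) (q : ℓ²(X, ℂ)) :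
    Summable fun z => ‖entry A x z * q z‖ := by
  classical
  simpa [entry_eq_conj_adjoint_apply] using
    lp.summable_mul (by simpa using Real.HolderConjugate.two_two) (A.adjoint (lp.single 2 x 1)) q

theorem summable_norm_mul_entry (A : ℓ²(X, ℂ) →L[ℂ] ℓ²(X, ℂ)) (y : X) (q : ℓ²(X, ℂ)) :
    Summable fun w => ‖q w * entry A w y‖ := by
  classical
  simpa [entry_eq_apply] using
    lp.summable_mul (by simpa using Real.HolderConjugate.two_two) q (A (lp.single 2 y 1))

end Entries

section MulOperator

variable {X : Type*}

def mulOperator (μ : lp (fun _ : X => ℂ) ∞) : ℓ²(X, ℂ) →L[ℂ] ℓ²(X, ℂ) :=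
  LinearMap.mkContinuous
    { toFun := fun q => ⟨fun z => μ z * q z,
        (lp.memℓp q).norm.const_mul ‖μ‖ |>.mono fun z => by
          rw [norm_mul]
          gcongr
          exact lp.norm_apply_le_norm ENNReal.top_ne_zero μ z⟩
      map_add' := fun q q' => by ext z; exact mul_add _ _ _
      map_smul' := fun c q => by ext z; simp [mul_left_comm] }
    ‖μ‖ fun q => by
      calc _ ≤ ‖(‖μ‖ : ℂ) • q‖ := lp.norm_mono two_ne_zero fun z => ?_
        _ = ‖μ‖ * ‖q‖ := by rw [lp.norm_const_smul two_ne_zero, Complex.norm_real, norm_norm]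
      change ‖μ z * q z‖ ≤ _
      rw [lp.coeFn_smul, Pi.smul_apply, smul_eq_mul, norm_mul, norm_mul, Complex.norm_real,
        norm_norm]
      exact mul_le_mul_of_nonneg_right (lp.norm_apply_le_norm ENNReal.top_ne_zero μ z)
        (norm_nonneg _)

@[simp]
theorem mulOperator_apply (μ : lp (fun _ : X => ℂ) ∞) (q : ℓ²(X, ℂ)) (z : X) :
    mulOperator μ q z = μ z * q z := rfl

theorem entry_mulOperator_mul (μ : lp (fun _ : X => ℂ) ∞) (A : ℓ²(X, ℂ) →L[ℂ] ℓ²(X, ℂ))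
    (x y : X) : entry (mulOperator μ * A) x y = μ x * entry A x y := by
  classical
  simp only [entry_eq_apply]
  rfl

theorem entry_mul_mulOperator (μ : lp (fun _ : X => ℂ) ∞) (A : ℓ²(X, ℂ) →L[ℂ] ℓ²(X, ℂ))
    (x y : X) : entry (A * mulOperator μ) x y = entry A x y * μ y := by
  classical
  have h : mulOperator μ (lp.single 2 y 1) = μ y • lp.single 2 y 1 := by
    ext z
    by_cases hz : z = y
    · subst hz; simp
    · simp [Pi.single_eq_of_ne hz]
  simp only [entry_eq_apply, ContinuousLinearMap.mul_def, ContinuousLinearMap.comp_apply, h,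
    map_smul, lp.coeFn_smul, Pi.smul_apply, smul_eq_mul, mul_comm]

end MulOperator

theorem mul_sub_mul_eq_of_mul_eq_one {R : Type*} [Ring R] {a b : R} (hab : a * b = 1)
    (hba : b * a = 1) (m : R) : m * b - b * m = b * (a * m - m * a) * b := by
  calc m * b - b * m = (b * a) * m * b - b * m * (a * b) := by rw [hab, hba, one_mul, mul_one]
    _ = b * (a * m - m * a) * b := by noncomm_ring

theorem sub_mul_entry_eq_tsum {X : Type*} (μ : lp (fun _ : X => ℂ) ∞)
    {A R : ℓ²(X, ℂ) →L[ℂ] ℓ²(X, ℂ)} (hAR : A * R = 1) (hRA : R * A = 1) (x y : X) :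
    (μ x - μ y) * entry R x y =
      ∑' z, entry R x z * ∑' w, (μ w - μ z) * entry A z w * entry R w y := by
  have h := congrArg (fun T => entry T x y) (mul_sub_mul_eq_of_mul_eq_one hAR hRA (mulOperator μ))
  rw [entry_sub, entry_mulOperator_mul, entry_mul_mulOperator, mul_assoc, entry_mul] at h
  simp only [entry_mul _ R, entry_sub, entry_mulOperator_mul, entry_mul_mulOperator] at h
  rw [sub_mul, mul_comm (μ y), h]
  refine tsum_congr fun z => ?_
  congr 1
  refine tsum_congr fun w => ?_
  ring

section BoxClamp

theorem abs_max_min_sub_max_min_le (r s t : ℝ) :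
    |max (-r) (min r s) - max (-r) (min r t)| ≤ |s - t| := by
  rw [max_comm (-r), max_comm (-r)]
  refine (abs_max_sub_max_le_abs _ _ _).trans ?_
  simpa using abs_min_sub_min_le_max r s r t

def boxClamp (r : ℝ) (z : ℂ) : ℂ := ⟨max (-r) (min r z.re), max (-r) (min r z.im)⟩

theorem norm_boxClamp_le {r : ℝ} (hr : 0 ≤ r) (z : ℂ) : ‖boxClamp r z‖ ≤ 2 * r := by
  have hbox : ∀ s : ℝ, |max (-r) (min r s)| ≤ r := fun s =>
    abs_le.2 ⟨le_max_left _ _, max_le (by linarith) (min_le_left _ _)⟩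
  calc ‖boxClamp r z‖ ≤ |(boxClamp r z).re| + |(boxClamp r z).im| :=
        Complex.norm_le_abs_re_add_abs_im _
    _ ≤ 2 * r := (add_le_add (hbox z.re) (hbox z.im)).trans_eq (two_mul r).symm

theorem norm_boxClamp_sub_le (r : ℝ) (z w : ℂ) : ‖boxClamp r z - boxClamp r w‖ ≤ ‖z - w‖ := by
  rw [← sq_le_sq₀ (norm_nonneg _) (norm_nonneg _), Complex.sq_norm, Complex.sq_norm,
    Complex.normSq_apply, Complex.normSq_apply]
  have hre := sq_le_sq.2 (abs_max_min_sub_max_min_le r z.re w.re)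
  have him := sq_le_sq.2 (abs_max_min_sub_max_min_le r z.im w.im)
  simp only [boxClamp, Complex.sub_re, Complex.sub_im] at hre him ⊢
  nlinarith

theorem boxClamp_of_norm_le {r : ℝ} {z : ℂ} (hz : ‖z‖ ≤ r) : boxClamp r z = z := by
  have hfix : ∀ s : ℝ, |s| ≤ r → max (-r) (min r s) = s := fun s hs => by
    rw [min_eq_right (abs_le.1 hs).2, max_eq_right (abs_le.1 hs).1]
  exact Complex.ext (hfix _ ((Complex.abs_re_le_norm z).trans hz))
    (hfix _ ((Complex.abs_im_le_norm z).trans hz))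

def boxClampSlope (r : ℝ) (a b : ℂ) : ℂ :=
  if a = b then 1 else (boxClamp r a - boxClamp r b) / (a - b)

theorem boxClamp_sub_boxClamp (r : ℝ) (a b : ℂ) :
    boxClamp r a - boxClamp r b = boxClampSlope r a b * (a - b) := by
  by_cases h : a = b
  · simp [h]
  · rw [boxClampSlope, if_neg h, div_mul_cancel₀ _ (sub_ne_zero.2 h)]

theorem norm_boxClampSlope_le (r : ℝ) (a b : ℂ) : ‖boxClampSlope r a b‖ ≤ 1 := by
  by_cases h : a = b
  · simp [boxClampSlope, h]
  · rw [boxClampSlope, if_neg h, norm_div, div_le_one (norm_pos_iff.2 (sub_ne_zero.2 h))]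
    exact norm_boxClamp_sub_le r a b

theorem tendsto_boxClamp (z : ℂ) : Tendsto (fun n : ℕ => boxClamp n z) atTop (𝓝 z) :=
  tendsto_const_nhds.congr' <| (eventually_ge_atTop ⌈‖z‖⌉₊).mono fun _ hn =>
    (boxClamp_of_norm_le (Nat.ceil_le.1 hn)).symm

theorem tendsto_boxClampSlope (a b : ℂ) :
    Tendsto (fun n : ℕ => boxClampSlope n a b) atTop (𝓝 1) := by
  by_cases h : a = b
  · simp [boxClampSlope, h]
  · simp only [boxClampSlope, if_neg h]
    simpa [div_self (sub_ne_zero.2 h)] using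
      ((tendsto_boxClamp a).sub (tendsto_boxClamp b)).div_const (a - b)

end BoxClamp

section DoubleSums

variable {X Y : Type*}

theorem tsum_tsum_eq_tsum_prod {k : X → Y → ℂ} (hk : Summable fun q : X × Y => ‖k q.1 q.2‖) :
    ∑' z, ∑' w, k z w = ∑' q : X × Y, k q.1 q.2 :=
  (hk.of_norm.tsum_prod' fun z => hk.of_norm.prod_factor z).symm

theorem tendsto_tsum_tsum_mul {ι : Type*} {l : Filter ι} {k : X → Y → ℂ}
    (hk : Summable fun q : X × Y => ‖k q.1 q.2‖) {ρ : ι → X → Y → ℂ} {K : ℝ}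
    (hρ : ∀ n z w, ‖ρ n z w‖ ≤ K) (hlim : ∀ z w, Tendsto (fun n => ρ n z w) l (𝓝 1)) :
    Tendsto (fun n => ∑' z, ∑' w, k z w * ρ n z w) l (𝓝 (∑' z, ∑' w, k z w)) := by
  have hbound : ∀ n (q : X × Y), ‖k q.1 q.2 * ρ n q.1 q.2‖ ≤ K * ‖k q.1 q.2‖ := fun n q => by
    rw [norm_mul, mul_comm K]
    exact mul_le_mul_of_nonneg_left (hρ n q.1 q.2) (norm_nonneg _)
  have hprod : ∀ n, ∑' z, ∑' w, k z w * ρ n z w = ∑' q : X × Y, k q.1 q.2 * ρ n q.1 q.2 :=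
    fun n => tsum_tsum_eq_tsum_prod (k := fun z w => k z w * ρ n z w)
      ((hk.mul_left K).of_nonneg_of_le (fun _ => norm_nonneg _) (hbound n))
  simp_rw [hprod, tsum_tsum_eq_tsum_prod hk]
  refine tendsto_tsum_of_dominated_convergence (hk.mul_left K) (fun q => ?_)
    (Eventually.of_forall hbound)
  simpa using (hlim q.1 q.2).const_mul (k q.1 q.2)

variable {ι : Type*} [Fintype ι] {a : ι → X → ℂ} {b : ι → Y → ℂ}

theorem summable_norm_sum_mul (ha : ∀ j, Summable fun z => ‖a j z‖)
    (hb : ∀ j, Summable fun w => ‖b j w‖) :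
    Summable fun q : X × Y => ‖∑ j, a j q.1 * b j q.2‖ := by
  have hsum : Summable fun q : X × Y => ∑ j, ‖a j q.1‖ * ‖b j q.2‖ :=
    summable_sum fun j _ =>
      (ha j).mul_of_nonneg (hb j) (fun _ => norm_nonneg _) (fun _ => norm_nonneg _)
  refine hsum.of_nonneg_of_le (fun _ => norm_nonneg _) fun q => ?_
  simpa only [norm_mul] using norm_sum_le Finset.univ fun j => a j q.1 * b j q.2

theorem tsum_tsum_sum_mul (ha : ∀ j, Summable fun z => ‖a j z‖)
    (hb : ∀ j, Summable fun w => ‖b j w‖) :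
    ∑' z, ∑' w, ∑ j, a j z * b j w = ∑ j, (∑' z, a j z) * ∑' w, b j w := by
  rw [tsum_tsum_eq_tsum_prod (k := fun z w => ∑ j, a j z * b j w) (summable_norm_sum_mul ha hb),
    Summable.tsum_finsetSum fun j _ => summable_mul_of_summable_norm (ha j) (hb j)]
  exact Finset.sum_congr rfl fun j _ => (tsum_mul_tsum_of_summable_norm (ha j) (hb j)).symm

end DoubleSums

theorem sub_mul_entry_eq_of_mul_eq_one {X ι : Type*} [Fintype ι] (p : X → ℂ)
    (f g : ι → ℓ²(X, ℂ)) {A R : ℓ²(X, ℂ) →L[ℂ] ℓ²(X, ℂ)} (hAR : A * R = 1) (hRA : R * A = 1)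
    (hcomm : ∀ z w, (p z - p w) * entry A z w = ∑ j, f j z * g j w) (x y : X) :
    (p x - p y) * entry R x y = -∑ j, R (f j) x * ∑' w, g j w * entry R w y := by
  set a : ι → X → ℂ := fun j z => entry R x z * f j z
  set b : ι → X → ℂ := fun j w => g j w * entry R w y
  have ha : ∀ j, Summable fun z => ‖a j z‖ := fun j => summable_norm_entry_mul R x (f j)
  have hb : ∀ j, Summable fun w => ‖b j w‖ := fun j => summable_norm_mul_entry R y (g j)
  let μ : ℕ → lp (fun _ : X => ℂ) ∞ := fun n => ⟨fun z => boxClamp n (p z),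
    memℓp_infty ⟨2 * n, Set.forall_mem_range.2 fun z => norm_boxClamp_le n.cast_nonneg _⟩⟩
  have hreg : ∀ n : ℕ, (μ n x - μ n y) * entry R x y =
      -∑' z, ∑' w, (∑ j, a j z * b j w) * boxClampSlope n (p z) (p w) := by
    intro n
    rw [sub_mul_entry_eq_tsum (μ n) hAR hRA, ← tsum_neg]
    refine tsum_congr fun z => ?_
    rw [← tsum_mul_left, ← tsum_neg]
    refine tsum_congr fun w => ?_
    have hμ : μ n w - μ n z = -(boxClampSlope n (p z) (p w) * (p z - p w)) := by
      rw [← boxClamp_sub_boxClamp, neg_sub]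
    rw [hμ, neg_mul, mul_assoc, hcomm]
    simp only [a, b, Finset.mul_sum, Finset.sum_mul, neg_mul, mul_neg, ← Finset.sum_neg_distrib]
    exact Finset.sum_congr rfl fun j _ => by ring
  have hrhs : Tendsto (fun n : ℕ => (μ n x - μ n y) * entry R x y) atTop
      (𝓝 (-∑' z, ∑' w, ∑ j, a j z * b j w)) := by
    refine Tendsto.congr (fun n => (hreg n).symm) ?_
    exact (tendsto_tsum_tsum_mul (k := fun z w => ∑ j, a j z * b j w)
      (ρ := fun (n : ℕ) z w => boxClampSlope n (p z) (p w)) (summable_norm_sum_mul ha hb)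
      (fun n _ _ => norm_boxClampSlope_le n _ _) fun _ _ => tendsto_boxClampSlope _ _).neg
  have hlhs : Tendsto (fun n : ℕ => (μ n x - μ n y) * entry R x y) atTop
      (𝓝 ((p x - p y) * entry R x y)) :=
    ((tendsto_boxClamp (p x)).sub (tendsto_boxClamp (p y))).mul_const _
  rw [tendsto_nhds_unique hlhs hrhs, tsum_tsum_sum_mul ha hb]
  congr 1
  refine Finset.sum_congr rfl fun j _ => ?_
  rw [(hasSum_entry_mul R x (f j)).tsum_eq]

theorem statement12 (𝔛 : Set ℂ)
    (N : ℕ) (f g : Fin N → lp (fun _ : 𝔛 => ℂ) 2)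
    (horth : ∀ x : 𝔛, ∑ j, f j x * g j x = 0)
    (V : lp (fun _ : 𝔛 => ℂ) 2 →L[ℂ] lp (fun _ : 𝔛 => ℂ) 2)
    (hV : ∀ x y : 𝔛, x ≠ y → entry V x y = (∑ j, f j x * g j y) / ((x : ℂ) - (y : ℂ)))
    (hinv : IsUnit (1 + V)) :
    ∃ F G : Fin N → 𝔛 → ℂ, ∀ x y : 𝔛, x ≠ y →
      entry (V * Ring.inverse (1 + V)) x y =
        (∑ j, F j x * G j y) / ((x : ℂ) - (y : ℂ)) := by
  set R := Ring.inverse (1 + V)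
  have hAR : (1 + V) * R = 1 := Ring.mul_inverse_cancel _ hinv
  have hW : V * R = 1 - R := by rw [eq_sub_iff_add_eq, ← hAR]; noncomm_ring
  have hcomm : ∀ z w : 𝔛, ((z : ℂ) - w) * entry (1 + V) z w = ∑ j, f j z * g j w := by
    intro z w
    by_cases hzw : z = w
    · rw [hzw, sub_self, zero_mul, horth]
    · have hne : (z : ℂ) - w ≠ 0 := sub_ne_zero.2 (Subtype.coe_injective.ne hzw)
      rw [entry_add, entry_one_of_ne hzw, zero_add, hV z w hzw, mul_div_cancel₀ _ hne]
  refine ⟨fun j => R (f j), fun j y => ∑' w, g j w * entry R w y, fun x y hxy => ?_⟩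
  have hkey := sub_mul_entry_eq_of_mul_eq_one (fun z : 𝔛 => (z : ℂ)) f g hAR
    (Ring.inverse_mul_cancel _ hinv) hcomm x y
  rw [hW, entry_sub, entry_one_of_ne hxy,
    eq_div_iff (sub_ne_zero.2 (Subtype.coe_injective.ne hxy))]
  linear_combination -hkey
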